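/- arXiv:2109.11711 — 4 statements merged into one kernel-verified Lean document; each statement's English description precedes it below -/
import Mathlib

section
/- Lemma (the paper's Lemma 4.3). Let r be an order with levels on X, let (τ₀, ω₀) be a persistence pair of r, and let ε > 0. For every feasible chain z = ω₀ + Σ_{ω ∈ F_{ε,n}} α_ω ω, the set V_z := {ω₀} ∪ {ω ∈ F_{ε,n} : α_ω = 1} is a union of vertex sets of connected components of the graph G(r̂ ≥ r̂(τ₀) + ε): every connected component of G(r̂ ≥ r̂(τ₀) + ε) has its set of n-cells either contained in V_z or disjoint from V_z. -/
open scoped Classical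

namespace StableVol

/-- A finite abstract simplicial complex of dimension `n`: a finite family of nonempty
finite subsets of the vertex set, closed under nonempty subsets, in which every element
is contained in an element of cardinality `n+1`. -/
structure NComplex (V : Type*) [DecidableEq V] (n : ℕ) where
  X : Finset (Finset V)
  nonempty_mem : ∀ σ ∈ X, σ.Nonempty
  down_closed : ∀ σ ∈ X, ∀ σ' : Finset V, σ' ⊆ σ → σ'.Nonempty → σ' ∈ X
  contained_top : ∀ σ ∈ X, ∃ ω ∈ X, σ ⊆ ω ∧ ω.card = n + 1

variable {V : Type*} [DecidableEq V] {n : ℕ}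

/-- An `n`-cell is either an `n`-simplex (`some ω`) or the formal cell `ω∞` (`none`). -/
abbrev Cell (V : Type*) := Option (Finset V)

/-- `τ` is a face of the cell `c`.  For `c = some ω` this means that `ω` is an
`n`-simplex of `X` containing `τ`; the faces of `ω∞ = none` are the `(n-1)`-simplices
having exactly one `n`-simplex coface. -/
def faceCell (C : NComplex V n) (τ : Finset V) : Cell V → Prop
  | some ω => ω ∈ C.X ∧ ω.card = n + 1 ∧ τ ⊆ ω
  | none => {ω | ω ∈ C.X ∧ ω.card = n + 1 ∧ τ ⊆ ω}.ncard = 1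

def IsCell (C : NComplex V n) : Cell V → Prop
  | some ω => ω ∈ C.X ∧ ω.card = n + 1
  | none => True

/-- Adjacency in the dual graph, restricted to the edge set `E ⊆ X^(n-1)`. -/
def adj (C : NComplex V n) (E : Set (Finset V)) (c c' : Cell V) : Prop :=
  ∃ τ ∈ E, faceCell C τ c ∧ faceCell C τ c' ∧ c ≠ c'

/-- `KV C E c₀`: the set of `n`-cells in the connected component of `c₀` in the
subgraph of the dual graph with edge set `E`. -/
def KV (C : NComplex V n) (E : Set (Finset V)) (c₀ : Cell V) : Set (Cell V) :=
  {c | Relation.ReflTransGen (adj C E) c₀ c}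

/-- Every `(n-1)`-simplex of `X` is a face of exactly two `n`-cells. -/
def TwoCofaces (C : NComplex V n) : Prop :=
  ∀ τ ∈ C.X, τ.card = n →
    ∃ c₁ c₂ : Cell V, c₁ ≠ c₂ ∧ ∀ c : Cell V, faceCell C τ c ↔ (c = c₁ ∨ c = c₂)

/-- The dual graph (with full edge set `X^(n-1)`) is connected. -/
def DualConn (C : NComplex V n) : Prop :=
  ∀ c c' : Cell V, IsCell C c → IsCell C c' →
    c' ∈ KV C {τ | τ ∈ C.X ∧ τ.card = n} c

/-- A level function: monotone with respect to strict inclusion of simplices. -/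
def IsLevelFun (C : NComplex V n) (lev : Finset V → ℝ) : Prop :=
  ∀ σ ∈ C.X, ∀ σ' ∈ C.X, σ ⊂ σ' → lev σ ≤ lev σ'

/-- `(lev, slt)` is an order with levels on `X`: `lev` is a level function and `slt`
is (the strict form of) a linear order on `X` refining both `lev` and strict
inclusion. -/
def IsOWL (C : NComplex V n) (lev : Finset V → ℝ)
    (slt : Finset V → Finset V → Prop) : Prop :=
  IsLevelFun C lev ∧
  (∀ σ ∈ C.X, ¬ slt σ σ) ∧
  (∀ σ ∈ C.X, ∀ σ' ∈ C.X, ∀ σ'' ∈ C.X, slt σ σ' → slt σ' σ'' → slt σ σ'') ∧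
  (∀ σ ∈ C.X, ∀ σ' ∈ C.X, σ ≠ σ' → slt σ σ' ∨ slt σ' σ) ∧
  (∀ σ ∈ C.X, ∀ σ' ∈ C.X, slt σ σ' → lev σ ≤ lev σ') ∧
  (∀ σ ∈ C.X, ∀ σ' ∈ C.X, σ ⊂ σ' → slt σ σ')

/-- Extension of a strict order on simplices to `n`-cells, `ω∞ = none` being the
unique maximum. -/
def cslt (slt : Finset V → Finset V → Prop) : Cell V → Cell V → Prop
  | some σ, some σ' => slt σ σ'
  | some _, none => True
  | none, _ => False

/-- `m` is the maximum cell of the set `S` with respect to the order `slt`. -/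
def IsMaxCell (slt : Finset V → Finset V → Prop) (S : Set (Cell V)) (m : Cell V) :
    Prop :=
  m ∈ S ∧ ∀ c ∈ S, c ≠ m → cslt slt c m

/-- Edge set of `G(≻ σ₀)`: the `(n-1)`-simplices strictly above `σ₀`. -/
def Egt (C : NComplex V n) (slt : Finset V → Finset V → Prop) (σ₀ : Finset V) :
    Set (Finset V) :=
  {τ | τ ∈ C.X ∧ τ.card = n ∧ slt σ₀ τ}

/-- Edge set of `G(⪰ σ₀)`. -/
def Ege (C : NComplex V n) (slt : Finset V → Finset V → Prop) (σ₀ : Finset V) :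
    Set (Finset V) :=
  {τ | τ ∈ C.X ∧ τ.card = n ∧ (τ = σ₀ ∨ slt σ₀ τ)}

/-- Edge set of `G(lev ≥ s)`. -/
def Elev (C : NComplex V n) (lev : Finset V → ℝ) (s : ℝ) : Set (Finset V) :=
  {τ | τ ∈ C.X ∧ τ.card = n ∧ s ≤ lev τ}

/-- `(τ₀, ω₀)` is a persistence pair of the order `slt`: the two `n`-cells having
`τ₀` as a face lie in distinct connected components of `G(≻ τ₀)`, and `ω₀` is the
smaller of the two maximum cells of these two components. -/
def IsPersPair (C : NComplex V n) (slt : Finset V → Finset V → Prop)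
    (τ₀ ω₀ : Finset V) : Prop :=
  τ₀ ∈ C.X ∧ τ₀.card = n ∧ ω₀ ∈ C.X ∧ ω₀.card = n + 1 ∧
  ∃ c₁ c₂ : Cell V, c₁ ≠ c₂ ∧ faceCell C τ₀ c₁ ∧ faceCell C τ₀ c₂ ∧
    c₂ ∉ KV C (Egt C slt τ₀) c₁ ∧
    ∃ m₂ : Cell V,
      IsMaxCell slt (KV C (Egt C slt τ₀) c₁) (some ω₀) ∧
      IsMaxCell slt (KV C (Egt C slt τ₀) c₂) m₂ ∧
      cslt slt (some ω₀) m₂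

/-- The optimal volume `OV(q, ω₀) = K_V(G(≻_q τ_{q,ω₀}), ω₀)`. -/
def OV (C : NComplex V n) (slt : Finset V → Finset V → Prop) (ω₀ : Finset V) :
    Set (Cell V) :=
  {c | ∃ τ, IsPersPair C slt τ ω₀ ∧ c ∈ KV C (Egt C slt τ) (some ω₀)}

/-- The stable volume `SV_ε(r, τ₀, ω₀) = K_V(G(r̂ ≥ r̂(τ₀) + ε), ω₀)`. -/
def SV (C : NComplex V n) (lev : Finset V → ℝ) (τ₀ ω₀ : Finset V) (ε : ℝ) :
    Set (Cell V) :=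
  KV C (Elev C lev (lev τ₀ + ε)) (some ω₀)

/-- `(qlev, qslt) ∈ R_ε`: an order with levels uniformly `ε/2`-close to `rlev`
satisfying the `(r, ω₀)`-order condition. -/
def InR (C : NComplex V n) (rlev : Finset V → ℝ)
    (rslt : Finset V → Finset V → Prop) (ω₀ : Finset V) (ε : ℝ)
    (qlev : Finset V → ℝ) (qslt : Finset V → Finset V → Prop) : Prop :=
  IsOWL C qlev qslt ∧ (∀ σ ∈ C.X, |qlev σ - rlev σ| < ε / 2) ∧
  (∀ σ ∈ C.X, rslt σ ω₀ → qslt σ ω₀)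

/-- `F_{ε,n}`: the `n`-simplices with level at least `lev τ₀ + ε` that precede `ω₀`. -/
def Fcells (C : NComplex V n) (lev : Finset V → ℝ)
    (slt : Finset V → Finset V → Prop) (τ₀ ω₀ : Finset V) (ε : ℝ) :
    Set (Finset V) :=
  {σ | σ ∈ C.X ∧ σ.card = n + 1 ∧ lev τ₀ + ε ≤ lev σ ∧ slt σ ω₀}

/-- `F_{ε,n-1}`: the `(n-1)`-simplices with level at least `lev τ₀ + ε` that
precede `ω₀`. -/
def Fedges (C : NComplex V n) (lev : Finset V → ℝ)
    (slt : Finset V → Finset V → Prop) (τ₀ ω₀ : Finset V) (ε : ℝ) :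
    Set (Finset V) :=
  {σ | σ ∈ C.X ∧ σ.card = n ∧ lev τ₀ + ε ≤ lev σ ∧ slt σ ω₀}

/-- `τ*(∂z)`: the `ℤ/2ℤ`-sum of the coefficients of `z` over the `n`-simplex
cofaces of `τ`. -/
def bsum (C : NComplex V n) (τ : Finset V) (z : Finset V → ZMod 2) : ZMod 2 :=
  ∑ ω ∈ C.X.filter (fun ω => ω.card = n + 1 ∧ τ ⊆ ω), z ω

/-- A feasible chain `z = ω₀ + Σ_{ω ∈ F_{ε,n}} α_ω ω` with `τ*(∂z) = 0` for all
`τ ∈ F_{ε,n-1}`. -/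
def IsFeasible (C : NComplex V n) (lev : Finset V → ℝ)
    (slt : Finset V → Finset V → Prop) (τ₀ ω₀ : Finset V) (ε : ℝ)
    (z : Finset V → ZMod 2) : Prop :=
  z ω₀ = 1 ∧
  (∀ ω : Finset V, ω ≠ ω₀ → ω ∉ Fcells C lev slt τ₀ ω₀ ε → z ω = 0) ∧
  (∀ τ ∈ Fedges C lev slt τ₀ ω₀ ε, bsum C τ z = 0)

/-- `‖z‖₀`: the number of simplices of `X` with nonzero coefficient in `z`. -/
def norm0 (C : NComplex V n) (z : Finset V → ZMod 2) : ℕ :=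
  (C.X.filter fun ω => z ω ≠ 0).card

/-- The level function of the perturbed order `q(r, η, A)`. -/
noncomputable def pertLev (C : NComplex V n) (rlev : Finset V → ℝ) (η : ℝ)
    (A : Set (Finset V)) : Finset V → ℝ :=
  fun σ => if (σ ∈ C.X ∧ σ.card = n + 1) ∨ σ ∈ A then rlev σ + η else rlev σ - η

/-- The strict order of the perturbed order `q(r, η, A)`. -/
def pertSlt (C : NComplex V n) (rlev : Finset V → ℝ)
    (rslt : Finset V → Finset V → Prop) (η : ℝ) (A : Set (Finset V)) :
    Finset V → Finset V → Prop :=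
  fun σ σ' => pertLev C rlev η A σ < pertLev C rlev η A σ' ∨
    (pertLev C rlev η A σ = pertLev C rlev η A σ' ∧ rslt σ σ')

/-- The `(n-1)`-simplices that are edges of the connected component of `c₀` in the
subgraph with edge set `E`. -/
def compEdges (C : NComplex V n) (E : Set (Finset V)) (c₀ : Cell V) :
    Set (Finset V) :=
  {τ | τ ∈ E ∧ ∃ c, faceCell C τ c ∧ c ∈ KV C E c₀}

/-- `IsPath C E c c' vs es`: `vs` is the vertex list and `es` the edge list of a walk
from `c` to `c'` in the subgraph of the dual graph with edge set `E`. -/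
inductive IsPath (C : NComplex V n) (E : Set (Finset V)) :
    Cell V → Cell V → List (Cell V) → List (Finset V) → Prop
  | nil (c : Cell V) : IsPath C E c c [c] []
  | cons {c c' c'' : Cell V} {vs : List (Cell V)} {es : List (Finset V)}
      {τ : Finset V} : τ ∈ E → faceCell C τ c → faceCell C τ c' → c ≠ c' →
      IsPath C E c' c'' vs es → IsPath C E c c'' (c :: vs) (τ :: es)


/-- Lemma 4.3: for every feasible chain `z`, the set
`V_z = {ω₀} ∪ {ω ∈ F_{ε,n} : α_ω = 1}` is a union of vertex sets of connected
components of `G(r̂ ≥ r̂(τ₀) + ε)`. -/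
theorem feasible_chain_support_is_union_of_components
    (hn : 2 ≤ n) (C : NComplex V n) (htwo : TwoCofaces C) (hconn : DualConn C)
    (rlev : Finset V → ℝ) (rslt : Finset V → Finset V → Prop)
    (hr : IsOWL C rlev rslt)
    (τ₀ ω₀ : Finset V) (hpair : IsPersPair C rslt τ₀ ω₀)
    (ε : ℝ) (hε : 0 < ε)
    (z : Finset V → ZMod 2) (hz : IsFeasible C rlev rslt τ₀ ω₀ ε z) :
    ∀ c₀ : Cell V, IsCell C c₀ →
      (∀ c ∈ KV C (Elev C rlev (rlev τ₀ + ε)) c₀, ∃ ω : Finset V,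
        c = some ω ∧ (ω = ω₀ ∨ (ω ∈ Fcells C rlev rslt τ₀ ω₀ ε ∧ z ω = 1))) ∨
      (∀ c ∈ KV C (Elev C rlev (rlev τ₀ + ε)) c₀, ∀ ω : Finset V,
        (ω = ω₀ ∨ (ω ∈ Fcells C rlev rslt τ₀ ω₀ ε ∧ z ω = 1)) →
        c ≠ some ω) := by
  classical
  obtain ⟨hlev, hirr, htrans, htotal, hlevmono, hincl⟩ := hr
  obtain ⟨hτ₀X, hτ₀card, hω₀X, hω₀card, _⟩ := hpair
  obtain ⟨hz1, hz0, hzb⟩ := hz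
  set E := Elev C rlev (rlev τ₀ + ε) with hE
  set P : Cell V → Prop := fun c => ∃ ω : Finset V,
    c = some ω ∧ (ω = ω₀ ∨ (ω ∈ Fcells C rlev rslt τ₀ ω₀ ε ∧ z ω = 1)) with hP
  -- For a cell ω, P (some ω) implies z ω = 1
  have hPz : ∀ ω : Finset V, P (some ω) → z ω = 1 := by
    intro ω ⟨ω', hω', h⟩
    obtain rfl : ω = ω' := by simpa using hω'
    rcases h with rfl | ⟨_, h⟩
    · exact hz1
    · exact h
  -- Conversely, z ω = 1 implies P (some ω)
  have hzP : ∀ ω : Finset V, z ω = 1 → P (some ω) := by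
    intro ω hzω
    refine ⟨ω, rfl, ?_⟩
    by_cases h1 : ω = ω₀
    · exact Or.inl h1
    by_cases h2 : ω ∈ Fcells C rlev rslt τ₀ ω₀ ε
    · exact Or.inr ⟨h2, hzω⟩
    · exact absurd (hz0 ω h1 h2) (by rw [hzω]; decide)
  -- Key transfer lemma
  have step : ∀ (τ : Finset V) (c c' : Cell V), τ ∈ E → faceCell C τ c →
      faceCell C τ c' → c ≠ c' → P c → P c' := by
    intro τ c c' hτE hfc hfc' hne hPc
    obtain ⟨hτX, hτcard, hτlev⟩ := hτE
    -- P c gives c = some ω with z ω = 1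
    obtain ⟨ω, rfl, _⟩ := hPc
    have hzω : z ω = 1 := hPz ω ⟨ω, rfl, ‹_›⟩
    obtain ⟨hωX, hωcard, hτω⟩ := hfc
    -- First: rslt τ ω₀ must hold, otherwise z ω = 0
    have hτne : τ ≠ ω₀ := fun h => by
      rw [h] at hτcard; omega
    have hτssω : τ ⊂ ω := Finset.ssubset_iff_subset_ne.mpr
      ⟨hτω, fun h => by rw [h] at hτcard; omega⟩
    have hτltω : rslt τ ω := hincl τ hτX ω hωX hτssω
    have hτω₀ : rslt τ ω₀ := by
      by_contra hnot
      rcases htotal τ hτX ω₀ hω₀X hτne with h | h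
      · exact hnot h
      · -- ω₀ ≺ τ ≺ ω, so ω ≠ ω₀ and ω ∉ F, hence z ω = 0
        have hω₀ω : rslt ω₀ ω := htrans ω₀ hω₀X τ hτX ω hωX h hτltω
        have h1 : ω ≠ ω₀ := fun he => hirr ω₀ hω₀X (he ▸ hω₀ω)
        have h2 : ω ∉ Fcells C rlev rslt τ₀ ω₀ ε := fun hF =>
          hirr ω hωX (htrans ω hωX ω₀ hω₀X ω hωX hF.2.2.2 hω₀ω)
        exact absurd (hz0 ω h1 h2) (by rw [hzω]; decide)
    -- τ ∈ Fedges, so bsum τ z = 0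
    have hτF : τ ∈ Fedges C rlev rslt τ₀ ω₀ ε := ⟨hτX, hτcard, hτlev, hτω₀⟩
    have hbs : bsum C τ z = 0 := hzb τ hτF
    obtain ⟨c₁, c₂, hc12, hface⟩ := htwo τ hτX hτcard
    -- helper: if two distinct cells are both cofaces, they enumerate all cofaces
    have pairEq : ∀ a b : Cell V, a ≠ b → faceCell C τ a → faceCell C τ b →
        ∀ c : Cell V, faceCell C τ c ↔ (c = a ∨ c = b) := by
      intro a b hab hfa hfb c
      rw [hface c]
      rcases (hface a).mp hfa with rfl | rfl <;>
        rcases (hface b).mp hfb with rfl | rfl <;> tauto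
    match c' with
    | none =>
      -- then the coface filter is {ω}, so z ω = 0, contradiction
      exfalso
      have hpe := pairEq (some ω) none (by simp) ⟨hωX, hωcard, hτω⟩ hfc'
      have hfilt : C.X.filter (fun σ => σ.card = n + 1 ∧ τ ⊆ σ) = {ω} := by
        ext σ
        simp only [Finset.mem_filter, Finset.mem_singleton]
        constructor
        · rintro ⟨hσX, hσc, hστ⟩
          have hfσ : faceCell C τ (some σ) := ⟨hσX, hσc, hστ⟩
          rcases (hpe (some σ)).mp hfσ with h | h
          · exact Option.some_injective _ h
          · exact absurd h (by simp)
        · rintro rfl; exact ⟨hωX, hωcard, hτω⟩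
      have : bsum C τ z = z ω := by
        rw [bsum, hfilt, Finset.sum_singleton]
      rw [hbs, hzω] at this; exact absurd this (by decide)
    | some ω' =>
      obtain ⟨hω'X, hω'card, hτω'⟩ := hfc'
      have hωω' : ω ≠ ω' := fun h => hne (by rw [h])
      have hpe := pairEq (some ω) (some ω') (by simpa using hωω')
        ⟨hωX, hωcard, hτω⟩ ⟨hω'X, hω'card, hτω'⟩
      have hfilt : C.X.filter (fun σ => σ.card = n + 1 ∧ τ ⊆ σ) = {ω, ω'} := by
        ext σ
        simp only [Finset.mem_filter, Finset.mem_insert, Finset.mem_singleton]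
        constructor
        · rintro ⟨hσX, hσc, hστ⟩
          have hfσ : faceCell C τ (some σ) := ⟨hσX, hσc, hστ⟩
          rcases (hpe (some σ)).mp hfσ with h | h
          · exact Or.inl (Option.some_injective _ h)
          · exact Or.inr (Option.some_injective _ h)
        · rintro (rfl | rfl)
          · exact ⟨hωX, hωcard, hτω⟩
          · exact ⟨hω'X, hω'card, hτω'⟩
      have hsum : z ω + z ω' = 0 := by
        have : bsum C τ z = z ω + z ω' := by
          rw [bsum, hfilt, Finset.sum_pair hωω']
        rw [hbs] at this; exact this.symm
      have hzω' : z ω' = 1 := by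
        rw [hzω] at hsum
        have h := neg_eq_of_add_eq_zero_right hsum
        rw [← h]; decide
      exact hzP ω' hzω'
  -- P transfers along adjacency in both directions
  have adjstep : ∀ c c' : Cell V, adj C E c c' → (P c ↔ P c') := by
    intro c c' ⟨τ, hτE, hfc, hfc', hne⟩
    exact ⟨step τ c c' hτE hfc hfc' hne, step τ c' c hτE hfc' hfc hne.symm⟩
  -- P is constant on the component of c₀
  have hconst : ∀ c₀ c : Cell V, c ∈ KV C E c₀ → (P c₀ ↔ P c) := by
    intro c₀ c hc
    induction hc with
    | refl => exact Iff.rfl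
    | tail _ hadj ih => exact ih.trans (adjstep _ _ hadj)
  intro c₀ _
  by_cases hPc₀ : P c₀
  · left
    intro c hc
    exact (hconst c₀ c hc).mp hPc₀
  · right
    intro c hc ω hω hcω
    exact hPc₀ ((hconst c₀ c hc).mpr ⟨ω, hcω, hω⟩)

end StableVol
end

section
/- Lemma (the paper's Lemma 4.7). Let r be an order with levels on X, let (τ₀, ω₀) be a persistence pair of r, and let ε > 0. Then the chain z₁ := ω₀ + Σ_{ω ∈ K_V(G(r̂ ≥ r̂(τ₀)+ε), ω₀), ω ≠ ω₀} ω is a feasible chain; in particular K_V(G(r̂ ≥ r̂(τ₀)+ε), ω₀) ∖ {ω₀} ⊆ F_{ε,n} and τ*(∂z₁) = 0 for every τ ∈ F_{ε,n−1}. -/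
open scoped Classical

namespace StableVol

variable {V : Type*} [DecidableEq V] {n : ℕ}

/-!
Since `ε > 0`, every edge of `G(r̂ ≥ r̂(τ₀) + ε)` lies strictly above `τ₀`, so the component
of `ω₀` in that graph sits inside its component in `G(≻ τ₀)`, whose maximum is `ω₀`. Hence every
other cell of it is an `n`-simplex preceding `ω₀`, of level at least `r̂(τ₀) + ε` because it has a
face in the graph; in particular `ω∞` is not in it. The indicator of a connected component has
zero coboundary on each edge of the subgraph: both cofaces of the edge are in or out together,
and when they are in they are two genuine `n`-simplices, contributing `1 + 1 = 0`.
-/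

section Components

variable {C : NComplex V n} {E E' : Set (Finset V)}

theorem adj_mono (hE : E ⊆ E') {c c' : Cell V} (h : adj C E c c') : adj C E' c c' :=
  let ⟨τ, hτ, h₁, h₂, hne⟩ := h
  ⟨τ, hE hτ, h₁, h₂, hne⟩

theorem mem_KV_self {c₀ : Cell V} : c₀ ∈ KV C E c₀ :=
  Relation.ReflTransGen.refl

theorem KV_subset_of_mem {c₀ c₁ : Cell V} (hE : E ⊆ E') (h₀ : c₀ ∈ KV C E' c₁) :
    KV C E c₀ ⊆ KV C E' c₁ :=
  fun _ hc => h₀.trans (Relation.ReflTransGen.mono (fun _ _ => adj_mono hE) _ _ hc)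

theorem eq_or_exists_faceCell_of_mem_KV {c₀ c : Cell V} (hc : c ∈ KV C E c₀) :
    c = c₀ ∨ ∃ τ ∈ E, faceCell C τ c := by
  induction hc with
  | refl => exact Or.inl rfl
  | tail _ hadj _ =>
    obtain ⟨τ, hτ, -, hface, -⟩ := hadj
    exact Or.inr ⟨τ, hτ, hface⟩

theorem mem_KV_iff_of_faceCell {c₀ c c' : Cell V} {τ : Finset V} (hτ : τ ∈ E)
    (hc : faceCell C τ c) (hc' : faceCell C τ c') : c ∈ KV C E c₀ ↔ c' ∈ KV C E c₀ := by
  by_cases hne : c = c'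
  · rw [hne]
  · exact ⟨fun h => h.tail ⟨τ, hτ, hc, hc', hne⟩,
      fun h => h.tail ⟨τ, hτ, hc', hc, Ne.symm hne⟩⟩

end Components

section Coboundary

variable {C : NComplex V n} {τ : Finset V}

theorem filter_cofaces_eq_pair {a b : Finset V}
    (hfaces : ∀ c : Cell V, faceCell C τ c ↔ c = some a ∨ c = some b) :
    C.X.filter (fun ω => ω.card = n + 1 ∧ τ ⊆ ω) = {a, b} := by
  ext ω
  simp only [Finset.mem_filter, Finset.mem_insert, Finset.mem_singleton]
  exact (hfaces (some ω)).trans (by simp only [Option.some_inj])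

theorem bsum_indicator_eq_zero (htwo : TwoCofaces C) (hτX : τ ∈ C.X) (hτc : τ.card = n)
    {S : Set (Cell V)} (hnone : none ∉ S)
    (hclosed : ∀ c c', faceCell C τ c → faceCell C τ c' → (c ∈ S ↔ c' ∈ S)) :
    bsum C τ (fun ω => if (some ω : Cell V) ∈ S then 1 else 0) = 0 := by
  by_cases hin : ∃ ω, faceCell C τ (some ω) ∧ (some ω : Cell V) ∈ S
  · obtain ⟨ω, hω, hωS⟩ := hin
    have hS : ∀ c, faceCell C τ c → c ∈ S := fun c hc => (hclosed _ c hω hc).1 hωS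
    obtain ⟨d₁, d₂, hne, hfaces⟩ := htwo τ hτX hτc
    obtain ⟨a, rfl⟩ := Option.ne_none_iff_exists'.1
      fun h => hnone (h ▸ hS d₁ ((hfaces d₁).2 (Or.inl rfl)))
    obtain ⟨b, rfl⟩ := Option.ne_none_iff_exists'.1
      fun h => hnone (h ▸ hS d₂ ((hfaces d₂).2 (Or.inr rfl)))
    rw [bsum, filter_cofaces_eq_pair hfaces, Finset.sum_pair (fun h => hne (by rw [h])),
      if_pos (hS _ ((hfaces _).2 (Or.inl rfl))), if_pos (hS _ ((hfaces _).2 (Or.inr rfl)))]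
    decide
  · refine Finset.sum_eq_zero fun ω hω => if_neg fun hωS => hin ⟨ω, ?_, hωS⟩
    rw [Finset.mem_filter] at hω
    exact ⟨hω.1, hω.2⟩

end Coboundary

section StableVolume

variable {C : NComplex V n} {lev : Finset V → ℝ} {slt : Finset V → Finset V → Prop}
  {τ₀ ω₀ : Finset V} {ε : ℝ}

theorem Elev_subset_Egt (hr : IsOWL C lev slt) (hτ₀ : τ₀ ∈ C.X) (hε : 0 < ε) :
    Elev C lev (lev τ₀ + ε) ⊆ Egt C slt τ₀ := by
  obtain ⟨-, -, -, htot, hcomp, -⟩ := hr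
  rintro τ ⟨hτX, hτc, hτl⟩
  refine ⟨hτX, hτc, ?_⟩
  have hne : τ₀ ≠ τ := by rintro rfl; linarith
  exact (htot τ₀ hτ₀ τ hτX hne).resolve_right fun h => by
    linarith [hcomp τ hτX τ₀ hτ₀ h]

theorem IsLevelFun.le_of_faceCell (hlev : IsLevelFun C lev) {τ ω : Finset V} (hτX : τ ∈ C.X)
    (hτc : τ.card = n) (hface : faceCell C τ (some ω)) : lev τ ≤ lev ω := by
  obtain ⟨hωX, hωc, hτω⟩ := hface
  exact hlev τ hτX ω hωX (Finset.ssubset_iff_subset_ne.2 ⟨hτω, by rintro rfl; omega⟩)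

theorem exists_mem_Fcells_of_mem_SV (hr : IsOWL C lev slt)
    (hpair : IsPersPair C slt τ₀ ω₀) (hε : 0 < ε) {c : Cell V}
    (hc : c ∈ SV C lev τ₀ ω₀ ε) (hne : c ≠ some ω₀) :
    ∃ ω ∈ Fcells C lev slt τ₀ ω₀ ε, c = some ω := by
  obtain ⟨hτ₀, -, -, -, c₁, -, -, -, -, -, -, hmax, -, -⟩ := hpair
  have hlt : cslt slt c (some ω₀) :=
    hmax.2 c (KV_subset_of_mem (Elev_subset_Egt hr hτ₀ hε) hmax.1 hc) hne
  obtain ⟨ω, rfl⟩ : ∃ ω, c = some ω := Option.ne_none_iff_exists'.1 (by rintro rfl; exact hlt)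
  obtain ⟨τ, ⟨hτX, hτc, hτl⟩, hface⟩ := (eq_or_exists_faceCell_of_mem_KV hc).resolve_left hne
  exact ⟨ω, ⟨hface.1, hface.2.1, hτl.trans (hr.1.le_of_faceCell hτX hτc hface), hlt⟩, rfl⟩

theorem none_notMem_SV (hr : IsOWL C lev slt) (hpair : IsPersPair C slt τ₀ ω₀) (hε : 0 < ε) :
    none ∉ SV C lev τ₀ ω₀ ε := fun h => by
  obtain ⟨ω, -, hω⟩ := exists_mem_Fcells_of_mem_SV hr hpair hε h (Option.some_ne_none _).symm
  exact Option.some_ne_none _ hω.symm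

end StableVolume

theorem component_indicator_is_feasible_general
    (C : NComplex V n) (htwo : TwoCofaces C)
    (rlev : Finset V → ℝ) (rslt : Finset V → Finset V → Prop)
    (hr : IsOWL C rlev rslt)
    (τ₀ ω₀ : Finset V) (hpair : IsPersPair C rslt τ₀ ω₀)
    (ε : ℝ) (hε : 0 < ε) :
    ∀ z₁ : Finset V → ZMod 2,
      (∀ ω : Finset V,
        z₁ ω = if (some ω : Cell V) ∈ SV C rlev τ₀ ω₀ ε then 1 else 0) →
      IsFeasible C rlev rslt τ₀ ω₀ ε z₁ ∧
      (∀ c ∈ SV C rlev τ₀ ω₀ ε, c ≠ (some ω₀ : Cell V) →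
        ∃ ω ∈ Fcells C rlev rslt τ₀ ω₀ ε, c = some ω) ∧
      (∀ τ ∈ Fedges C rlev rslt τ₀ ω₀ ε, bsum C τ z₁ = 0) := by
  intro z₁ hz
  have hF : ∀ c ∈ SV C rlev τ₀ ω₀ ε, c ≠ some ω₀ →
      ∃ ω ∈ Fcells C rlev rslt τ₀ ω₀ ε, c = some ω :=
    fun _ => exists_mem_Fcells_of_mem_SV hr hpair hε
  have hbd : ∀ τ ∈ Fedges C rlev rslt τ₀ ω₀ ε, bsum C τ z₁ = 0 := by
    rintro τ ⟨hτX, hτc, hτl, -⟩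
    rw [funext hz]
    exact bsum_indicator_eq_zero htwo hτX hτc (none_notMem_SV hr hpair hε) fun _ _ =>
      mem_KV_iff_of_faceCell ⟨hτX, hτc, hτl⟩
  refine ⟨⟨(hz ω₀).trans (if_pos mem_KV_self), fun ω hne hnF => ?_, hbd⟩, hF, hbd⟩
  rw [hz, if_neg]
  intro hω
  obtain ⟨ω', hω', heq⟩ := hF _ hω (by simpa using hne)
  exact hnF (Option.some_injective _ heq ▸ hω')

/-- Lemma 4.7: the indicator chain of `K_V(G(r̂ ≥ r̂(τ₀)+ε), ω₀)`
is a feasible chain; in particular the component is contained in `{ω₀} ∪ F_{ε,n}`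
and all boundary conditions hold. -/
theorem component_indicator_is_feasible
    (hn : 2 ≤ n) (C : NComplex V n) (htwo : TwoCofaces C) (hconn : DualConn C)
    (rlev : Finset V → ℝ) (rslt : Finset V → Finset V → Prop)
    (hr : IsOWL C rlev rslt)
    (τ₀ ω₀ : Finset V) (hpair : IsPersPair C rslt τ₀ ω₀)
    (ε : ℝ) (hε : 0 < ε) :
    ∀ z₁ : Finset V → ZMod 2,
      (∀ ω : Finset V,
        z₁ ω = if (some ω : Cell V) ∈ SV C rlev τ₀ ω₀ ε then 1 else 0) →
      IsFeasible C rlev rslt τ₀ ω₀ ε z₁ ∧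
      (∀ c ∈ SV C rlev τ₀ ω₀ ε, c ≠ (some ω₀ : Cell V) →
        ∃ ω ∈ Fcells C rlev rslt τ₀ ω₀ ε, c = some ω) ∧
      (∀ τ ∈ Fedges C rlev rslt τ₀ ω₀ ε, bsum C τ z₁ = 0) :=
  component_indicator_is_feasible_general C htwo rlev rslt hr τ₀ ω₀ hpair ε hε

end StableVol
end

section
/- Lemma (concluding step of the proof of the paper's Claim 3.4). Let r be an order with levels on X, let (τ₀, ω₀) be a persistence pair of r, let ε > 0, and let q ∈ R_ε. Then every σ ∈ X^(n−1) with r̂(σ) ≥ r̂(τ₀) + ε satisfies σ ≻_q τ_{q,ω₀}; consequently G(r̂ ≥ r̂(τ₀) + ε) is a subgraph of G(≻_q τ_{q,ω₀}) and K_V(G(r̂ ≥ r̂(τ₀) + ε), ω₀) ⊆ K_V(G(≻_q τ_{q,ω₀}), ω₀). -/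
open scoped Classical

namespace StableVol

variable {V : Type*} [DecidableEq V] {n : ℕ}

/-
Idea: let `d₁, d₂` be the two cofaces of `τ_q = τ_{q,ω₀}` and `m` the `≼_q`-maximum of the
component of `d₂` in `G(≻_q τ_q)`, so `ω₀ ≺_q m`.  Through `d₁`, `τ_q`, `d₂` there is a walk
from `ω₀` to `m` in `G(⪰_q τ_q)`.  It cannot lie in `G(≻_r τ₀)`: there `ω₀` is the
`≼_r`-maximum of its component, so `m ≺_r ω₀` and, by the order condition, `m ≺_q ω₀`.
Hence some edge `τ' ⪰_q τ_q` has `r̂(τ') ≤ r̂(τ₀)`, and for `r̂(σ) ≥ r̂(τ₀) + ε` the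
`ε/2`-closeness of `q̂` to `r̂` gives `q̂(τ') < q̂(σ)`, whence `τ_q ⪯_q τ' ≺_q σ`.
-/

section Graph

variable {C : NComplex V n} {E E' : Set (Finset V)}

lemma adj_symm {c c' : Cell V} (h : adj C E c c') : adj C E c' c := by
  obtain ⟨τ, hτ, hc, hc', hne⟩ := h
  exact ⟨τ, hτ, hc', hc, hne.symm⟩

lemma mem_KV_comm {c c' : Cell V} (h : c' ∈ KV C E c) : c ∈ KV C E c' := by
  induction h with
  | refl => exact .refl
  | tail _ hadj ih => exact .head (adj_symm hadj) ih

lemma KV_subset_of_mem_s9 {c c' : Cell V} (h : c' ∈ KV C E c) : KV C E c' ⊆ KV C E c :=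
  fun _ h' => Relation.ReflTransGen.trans h h'

lemma KV_mono (hE : E ⊆ E') (c : Cell V) : KV C E c ⊆ KV C E' c :=
  fun _ => Relation.ReflTransGen.mono
    (fun _ _ ⟨τ, hτ, hf, hf', hne⟩ => ⟨τ, hE hτ, hf, hf', hne⟩) _ _

lemma mem_X_of_some_mem_KV {ω₀ ω : Finset V} (hω₀ : ω₀ ∈ C.X)
    (h : some ω ∈ KV C E (some ω₀)) : ω ∈ C.X := by
  rcases Relation.ReflTransGen.cases_tail h with h | ⟨_, _, τ, _, _, hf, _⟩
  · cases h
    exact hω₀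
  · exact hf.1

end Graph

section OrderWithLevels

variable {C : NComplex V n} {lev : Finset V → ℝ} {slt : Finset V → Finset V → Prop}
  {σ σ' : Finset V}

lemma IsOWL.slt_of_lev_lt (h : IsOWL C lev slt) (hσ : σ ∈ C.X) (hσ' : σ' ∈ C.X)
    (hlt : lev σ < lev σ') : slt σ σ' := by
  obtain ⟨-, -, -, htot, hlev, -⟩ := h
  rcases htot σ hσ σ' hσ' (by rintro rfl; exact hlt.false) with h | h
  · exact h
  · exact absurd (hlev σ' hσ' σ hσ h) hlt.not_ge

lemma IsOWL.lev_le_of_not_slt (h : IsOWL C lev slt) (hσ : σ ∈ C.X) (hσ' : σ' ∈ C.X)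
    (hn : ¬ slt σ σ') : lev σ' ≤ lev σ :=
  not_lt.1 fun hlt => hn (h.slt_of_lev_lt hσ hσ' hlt)

end OrderWithLevels

section PersistencePair

variable {C : NComplex V n} {slt : Finset V → Finset V → Prop} {τ₀ ω₀ : Finset V}

lemma IsPersPair.le_of_mem_KV (hpair : IsPersPair C slt τ₀ ω₀) {c : Cell V}
    (hc : c ∈ KV C (Egt C slt τ₀) (some ω₀)) : c = some ω₀ ∨ cslt slt c (some ω₀) := by
  obtain ⟨-, -, -, -, c₁, -, -, -, -, -, -, hmax, -, -⟩ := hpair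
  by_cases hne : c = some ω₀
  · exact .inl hne
  · exact .inr (hmax.2 c (KV_subset_of_mem_s9 hmax.1 hc) hne)

lemma IsPersPair.exists_gt_mem_KV_Ege (hpair : IsPersPair C slt τ₀ ω₀) :
    ∃ m, cslt slt (some ω₀) m ∧ m ∈ KV C (Ege C slt τ₀) (some ω₀) := by
  obtain ⟨hτ₀X, hτ₀c, -, -, d₁, d₂, hd, hf₁, hf₂, -, m, hmax₁, hmax₂, hlt⟩ := hpair
  have hEgt : Egt C slt τ₀ ⊆ Ege C slt τ₀ := fun τ ⟨hX, hc, h⟩ => ⟨hX, hc, .inr h⟩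
  have hd₁ : d₁ ∈ KV C (Ege C slt τ₀) (some ω₀) := KV_mono hEgt _ (mem_KV_comm hmax₁.1)
  have hd₂ : d₂ ∈ KV C (Ege C slt τ₀) (some ω₀) :=
    hd₁.tail ⟨τ₀, ⟨hτ₀X, hτ₀c, .inl rfl⟩, hf₁, hf₂, hd⟩
  exact ⟨m, hlt, KV_subset_of_mem_s9 hd₂ (KV_mono hEgt _ hmax₂.1)⟩

end PersistencePair

variable {C : NComplex V n} {rlev qlev : Finset V → ℝ} {rslt qslt : Finset V → Finset V → Prop}
  {τ₀ τq ω₀ : Finset V} {ε : ℝ}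

lemma exists_Ege_not_mem_Egt (hpair : IsPersPair C rslt τ₀ ω₀)
    (hq : InR C rlev rslt ω₀ ε qlev qslt) (hqpair : IsPersPair C qslt τq ω₀) :
    ∃ τ' ∈ Ege C qslt τq, τ' ∉ Egt C rslt τ₀ := by
  obtain ⟨⟨-, hirr, htrans, -⟩, -, hord⟩ := hq
  have hω₀ : ω₀ ∈ C.X := hpair.2.2.1
  obtain ⟨m, hgt, hm⟩ := hqpair.exists_gt_mem_KV_Ege
  by_contra! hsub
  rcases hpair.le_of_mem_KV (KV_mono hsub _ hm) with rfl | hlt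
  · exact hirr ω₀ hω₀ hgt
  · obtain _ | μ := m
    · exact hlt
    · have hμ : μ ∈ C.X := mem_X_of_some_mem_KV hω₀ hm
      exact hirr ω₀ hω₀ (htrans ω₀ hω₀ μ hμ ω₀ hω₀ hgt (hord μ hμ hlt))

lemma persPair_slt_of_add_le_lev (hr : IsOWL C rlev rslt) (hpair : IsPersPair C rslt τ₀ ω₀)
    (hq : InR C rlev rslt ω₀ ε qlev qslt) (hqpair : IsPersPair C qslt τq ω₀) {σ : Finset V}
    (hσ : σ ∈ C.X) (hσlev : rlev τ₀ + ε ≤ rlev σ) : qslt τq σ := by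
  obtain ⟨τ', ⟨hτ', hτ'card, hge⟩, hnot⟩ := exists_Ege_not_mem_Egt hpair hq hqpair
  have hrτ' : rlev τ' ≤ rlev τ₀ :=
    hr.lev_le_of_not_slt hpair.1 hτ' fun h => hnot ⟨hτ', hτ'card, h⟩
  obtain ⟨hqOWL, hclose, -⟩ := hq
  have hqτ' := abs_sub_lt_iff.1 (hclose τ' hτ')
  have hqσ := abs_sub_lt_iff.1 (hclose σ hσ)
  have hτ'σ : qslt τ' σ := hqOWL.slt_of_lev_lt hτ' hσ (by linarith)
  rcases hge with rfl | hτqτ'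
  · exact hτ'σ
  · exact hqOWL.2.2.1 τq hqpair.1 τ' hτ' σ hσ hτqτ' hτ'σ

theorem level_graph_subgraph_of_q_graph_general
    (C : NComplex V n)
    (rlev : Finset V → ℝ) (rslt : Finset V → Finset V → Prop)
    (hr : IsOWL C rlev rslt)
    (τ₀ ω₀ : Finset V) (hpair : IsPersPair C rslt τ₀ ω₀)
    (ε : ℝ)
    (qlev : Finset V → ℝ) (qslt : Finset V → Finset V → Prop)
    (hq : InR C rlev rslt ω₀ ε qlev qslt) :
    (∀ σ ∈ C.X, σ.card = n → rlev τ₀ + ε ≤ rlev σ →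
      ∀ τq : Finset V, IsPersPair C qslt τq ω₀ → qslt τq σ) ∧
    ∀ τq : Finset V, IsPersPair C qslt τq ω₀ →
      Elev C rlev (rlev τ₀ + ε) ⊆ Egt C qslt τq ∧
      KV C (Elev C rlev (rlev τ₀ + ε)) (some ω₀) ⊆
        KV C (Egt C qslt τq) (some ω₀) := by
  have hsub : ∀ τq, IsPersPair C qslt τq ω₀ → Elev C rlev (rlev τ₀ + ε) ⊆ Egt C qslt τq :=
    fun _ hqpair _ ⟨hX, hcard, hlev⟩ =>
      ⟨hX, hcard, persPair_slt_of_add_le_lev hr hpair hq hqpair hX hlev⟩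
  exact ⟨fun _ hσ _ hσlev _ hqpair => persPair_slt_of_add_le_lev hr hpair hq hqpair hσ hσlev,
    fun τq hqpair => ⟨hsub τq hqpair, KV_mono (hsub τq hqpair) _⟩⟩

/-- concluding step of the proof of Claim 3.4: every
`(n-1)`-simplex of level at least `r̂(τ₀) + ε` is `≻_q τ_{q,ω₀}`; hence
`G(r̂ ≥ r̂(τ₀)+ε)` is a subgraph of `G(≻_q τ_{q,ω₀})` and the corresponding
components of `ω₀` are nested. -/
theorem level_graph_subgraph_of_q_graph
    (hn : 2 ≤ n) (C : NComplex V n) (htwo : TwoCofaces C) (hconn : DualConn C)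
    (rlev : Finset V → ℝ) (rslt : Finset V → Finset V → Prop)
    (hr : IsOWL C rlev rslt)
    (τ₀ ω₀ : Finset V) (hpair : IsPersPair C rslt τ₀ ω₀)
    (ε : ℝ) (hε : 0 < ε)
    (qlev : Finset V → ℝ) (qslt : Finset V → Finset V → Prop)
    (hq : InR C rlev rslt ω₀ ε qlev qslt) :
    (∀ σ ∈ C.X, σ.card = n → rlev τ₀ + ε ≤ rlev σ →
      ∀ τq : Finset V, IsPersPair C qslt τq ω₀ → qslt τq σ) ∧
    ∀ τq : Finset V, IsPersPair C qslt τq ω₀ →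
      Elev C rlev (rlev τ₀ + ε) ⊆ Egt C qslt τq ∧
      KV C (Elev C rlev (rlev τ₀ + ε)) (some ω₀) ⊆
        KV C (Egt C qslt τq) (some ω₀) :=
  level_graph_subgraph_of_q_graph_general C rlev rslt hr τ₀ ω₀ hpair ε qlev qslt hq

end StableVol
end

section
/- Lemma (the perturbed order construction; the paper's Facts 3.9, 3.10 and 3.11). Let r = (r̂, ≼_r) be an order with levels on X, let η > 0, let A ⊆ X^(n−1), and let q(r, η, A) = (q̂, ≼_q) be the perturbed order. Then: (i) q(r, η, A) is an order with levels on X, i.e. q̂ is a level function and ≼_q is a linear order on X such that σ ≺_q σ′ implies q̂(σ) ≤ q̂(σ′) and σ ⊊ σ′ implies σ ≺_q σ′; (ii) max_{σ ∈ X} |q̂(σ) − r̂(σ)| = η; (iii) ≼_q agrees with ≼_r on X^(n), on A, and on X^(n−1) ∖ A; and (iv) for every n-simplex ω₀ and every σ ∈ X, σ ≺_r ω₀ implies σ ≺_q ω₀ (the (r, ω₀)-order condition). -/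
open scoped Classical

namespace StableVol

variable {V : Type*} [DecidableEq V] {n : ℕ}

/-- Facts 3.9, 3.10 and 3.11: the perturbed order `q(r, η, A)` is
an order with levels, its level function is at uniform distance `η` from `r̂`, its
order agrees with `≼_r` on the `n`-simplices, on `A` and on `X^(n-1) ∖ A`, and it
satisfies the `(r, ω₀)`-order condition for every `n`-simplex `ω₀`. -/
theorem perturbed_order_properties
    (hn : 2 ≤ n) (C : NComplex V n)
    (rlev : Finset V → ℝ) (rslt : Finset V → Finset V → Prop)
    (hr : IsOWL C rlev rslt)
    (η : ℝ) (hη : 0 < η)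
    (A : Set (Finset V)) (hA : ∀ τ ∈ A, τ ∈ C.X ∧ τ.card = n) :
    IsOWL C (pertLev C rlev η A) (pertSlt C rlev rslt η A) ∧
    (∀ σ ∈ C.X, |pertLev C rlev η A σ - rlev σ| = η) ∧
    (∀ σ ∈ C.X, ∀ σ' ∈ C.X, σ.card = n + 1 → σ'.card = n + 1 →
      (pertSlt C rlev rslt η A σ σ' ↔ rslt σ σ')) ∧
    (∀ σ ∈ A, ∀ σ' ∈ A, (pertSlt C rlev rslt η A σ σ' ↔ rslt σ σ')) ∧
    (∀ σ ∈ C.X, ∀ σ' ∈ C.X, σ.card = n → σ'.card = n → σ ∉ A → σ' ∉ A →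
      (pertSlt C rlev rslt η A σ σ' ↔ rslt σ σ')) ∧
    (∀ ω₀ ∈ C.X, ω₀.card = n + 1 →
      ∀ σ ∈ C.X, rslt σ ω₀ → pertSlt C rlev rslt η A σ ω₀) := by
  obtain ⟨hlev, hirr, htrans, htot, hmono, hsubs⟩ := hr
  have hcard : ∀ σ ∈ C.X, σ.card ≤ n + 1 := by
    intro σ hσ
    obtain ⟨ω, hω, hsub', hc⟩ := C.contained_top σ hσ
    calc σ.card ≤ ω.card := Finset.card_le_card hsub'
    _ = n + 1 := hc
  have hup : ∀ σ, ((σ ∈ C.X ∧ σ.card = n + 1) ∨ σ ∈ A) →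
      pertLev C rlev η A σ = rlev σ + η := by
    intro σ h; unfold pertLev; rw [if_pos h]
  have hdown : ∀ σ, ¬ ((σ ∈ C.X ∧ σ.card = n + 1) ∨ σ ∈ A) →
      pertLev C rlev η A σ = rlev σ - η := by
    intro σ h; unfold pertLev; rw [if_neg h]
  -- (i) level function
  have hplev : ∀ σ ∈ C.X, ∀ σ' ∈ C.X, σ ⊂ σ' →
      pertLev C rlev η A σ ≤ pertLev C rlev η A σ' := by
    intro σ hσ σ' hσ' hss
    have h1 : rlev σ ≤ rlev σ' := hlev σ hσ σ' hσ' hss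
    by_cases hP : (σ ∈ C.X ∧ σ.card = n + 1) ∨ σ ∈ A
    · have hP' : (σ' ∈ C.X ∧ σ'.card = n + 1) ∨ σ' ∈ A := by
        left; refine ⟨hσ', ?_⟩
        have hlt : σ.card < σ'.card := Finset.card_lt_card hss
        have hle := hcard σ' hσ'
        rcases hP with ⟨_, hc⟩ | hmem
        · omega
        · have := (hA σ hmem).2; omega
      rw [hup σ hP, hup σ' hP']; linarith
    · rw [hdown σ hP]
      by_cases hP' : (σ' ∈ C.X ∧ σ'.card = n + 1) ∨ σ' ∈ A
      · rw [hup σ' hP']; linarith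
      · rw [hdown σ' hP']; linarith
  -- agreement lemma
  have agree : ∀ σ ∈ C.X, ∀ σ' ∈ C.X,
      pertLev C rlev η A σ - rlev σ = pertLev C rlev η A σ' - rlev σ' →
      (pertSlt C rlev rslt η A σ σ' ↔ rslt σ σ') := by
    intro σ hσ σ' hσ' hd
    unfold pertSlt
    constructor
    · rintro (hlt | ⟨heq, hrs⟩)
      · have h1 : rlev σ < rlev σ' := by linarith
        have hne : σ ≠ σ' := by intro h; subst h; exact lt_irrefl _ h1
        rcases htot σ hσ σ' hσ' hne with h | h
        · exact h
        · exact absurd (hmono σ' hσ' σ hσ h) (by linarith)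
      · exact hrs
    · intro hrs
      have h1 : rlev σ ≤ rlev σ' := hmono σ hσ σ' hσ' hrs
      rcases lt_or_eq_of_le h1 with h | h
      · left; linarith
      · right; exact ⟨by linarith, hrs⟩
  refine ⟨⟨hplev, ?_, ?_, ?_, ?_, ?_⟩, ?_, ?_, ?_, ?_, ?_⟩
  · -- irreflexive
    rintro σ hσ (h | ⟨_, h⟩)
    · exact lt_irrefl _ h
    · exact hirr σ hσ h
  · -- transitive
    rintro σ hσ σ' hσ' σ'' hσ'' (h1 | ⟨h1, h1'⟩) (h2 | ⟨h2, h2'⟩)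
    · exact Or.inl (lt_trans h1 h2)
    · exact Or.inl (by linarith)
    · exact Or.inl (by linarith)
    · exact Or.inr ⟨by linarith, htrans σ hσ σ' hσ' σ'' hσ'' h1' h2'⟩
  · -- total
    intro σ hσ σ' hσ' hne
    rcases lt_trichotomy (pertLev C rlev η A σ) (pertLev C rlev η A σ') with h | h | h
    · exact Or.inl (Or.inl h)
    · rcases htot σ hσ σ' hσ' hne with hr | hr
      · exact Or.inl (Or.inr ⟨h, hr⟩)
      · exact Or.inr (Or.inr ⟨h.symm, hr⟩)
    · exact Or.inr (Or.inl h)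
  · -- slt → lev ≤
    rintro σ hσ σ' hσ' (h | ⟨h, _⟩) <;> linarith
  · -- subset → slt
    intro σ hσ σ' hσ' hss
    have hle := hplev σ hσ σ' hσ' hss
    rcases lt_or_eq_of_le hle with h | h
    · exact Or.inl h
    · exact Or.inr ⟨h, hsubs σ hσ σ' hσ' hss⟩
  · -- (ii) distance η
    intro σ hσ
    by_cases hP : (σ ∈ C.X ∧ σ.card = n + 1) ∨ σ ∈ A
    · rw [hup σ hP]
      have : rlev σ + η - rlev σ = η := by ring
      rw [this]; exact abs_of_pos hη
    · rw [hdown σ hP]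
      have : rlev σ - η - rlev σ = -η := by ring
      rw [this, abs_neg]; exact abs_of_pos hη
  · -- (iii) agreement on n-simplices
    intro σ hσ σ' hσ' hc hc'
    refine agree σ hσ σ' hσ' ?_
    rw [hup σ (Or.inl ⟨hσ, hc⟩), hup σ' (Or.inl ⟨hσ', hc'⟩)]; ring
  · -- agreement on A
    intro σ hσ σ' hσ'
    refine agree σ (hA σ hσ).1 σ' (hA σ' hσ').1 ?_
    rw [hup σ (Or.inr hσ), hup σ' (Or.inr hσ')]; ring
  · -- agreement on X^(n-1) \ A
    intro σ hσ σ' hσ' hc hc' hnA hnA'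
    refine agree σ hσ σ' hσ' ?_
    have hP : ¬ ((σ ∈ C.X ∧ σ.card = n + 1) ∨ σ ∈ A) := by
      rintro (⟨_, h⟩ | h)
      · omega
      · exact hnA h
    have hP' : ¬ ((σ' ∈ C.X ∧ σ'.card = n + 1) ∨ σ' ∈ A) := by
      rintro (⟨_, h⟩ | h)
      · omega
      · exact hnA' h
    rw [hdown σ hP, hdown σ' hP']; ring
  · -- (iv) (r, ω₀)-order condition
    intro ω₀ hω₀ hc σ hσ hrs
    have h1 : rlev σ ≤ rlev ω₀ := hmono σ hσ ω₀ hω₀ hrs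
    have h2 : pertLev C rlev η A ω₀ = rlev ω₀ + η := hup ω₀ (Or.inl ⟨hω₀, hc⟩)
    by_cases hP : (σ ∈ C.X ∧ σ.card = n + 1) ∨ σ ∈ A
    · have h3 := hup σ hP
      rcases lt_or_eq_of_le h1 with h | h
      · exact Or.inl (by rw [h2, h3]; linarith)
      · exact Or.inr ⟨by rw [h2, h3, h], hrs⟩
    · have h3 := hdown σ hP
      exact Or.inl (by rw [h2, h3]; linarith)

end StableVol
end
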